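/- Let δ(x, y) = ‖x − y‖ be the Euclidean metric on ℝ^d. For any finite samples x₁, …, xₙ and y₁, …, yₘ in ℝ^d, the V-statistic V = (2/(mn))ΣᵢΣⱼ ‖xᵢ − yⱼ‖ − (1/n²)ΣᵢΣⱼ ‖xᵢ − xⱼ‖ − (1/m²)ΣᵢΣⱼ ‖yᵢ − yⱼ‖ is nonnegative. -/

import Mathlib

/-!
With weights `c = (1/n, …, 1/n, -1/m, …, -1/m)` on the pooled sample `z = (x, y)`, which sum to
zero, the V-statistic is `-∑ₖ∑ₗ cₖ cₗ ‖zₖ - zₗ‖`, so it suffices that the norm of a real inner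
product space is conditionally negative definite.

The Gaussian kernel `exp (-s ‖u - v‖²)` is positive semidefinite: it is the Hadamard product of a
rank-one matrix with the entrywise exponential of `2s` times the Gram matrix, which is positive
semidefinite by the Schur product theorem and the exponential series. Hence
`∑ₖ∑ₗ cₖ cₗ (1 - exp (-t² ‖zₖ - zₗ‖²)) ≤ 0`, and integrating against `dt / t²` over `(0, ∞)`
gives the claim, since the substitution `t ↦ t r` shows
`∫₀^∞ (1 - exp (-(t r)²)) / t² dt = r C` with `C > 0`.
-/

namespace Matrix

variable {ι : Type*} [Fintype ι]

theorem PosSemidef.map_pow {A : Matrix ι ι ℝ} (hA : A.PosSemidef) (N : ℕ) :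
    (A.map (· ^ N)).PosSemidef := by
  induction N with
  | zero =>
    convert posSemidef_vecMulVec_self_star (fun _ : ι => (1 : ℝ)) using 1
    ext; simp [vecMulVec]
  | succ N ih =>
    have h : A.map (· ^ (N + 1)) = A.map (· ^ N) ⊙ A := by ext; simp [pow_succ]
    exact h ▸ ih.hadamard hA

theorem PosSemidef.map_exp {A : Matrix ι ι ℝ} (hA : A.PosSemidef) :
    (A.map Real.exp).PosSemidef := by
  refine .of_dotProduct_mulVec_nonneg (hA.isHermitian.map _ fun _ => rfl) fun c => ?_
  have hseries : HasSum (fun N : ℕ => star c ⬝ᵥ (A.map (· ^ N) *ᵥ c) / N.factorial)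
      (star c ⬝ᵥ (A.map Real.exp *ᵥ c)) := by
    simp only [dotProduct, mulVec, map_apply, Finset.mul_sum, Finset.sum_div]
    refine hasSum_sum fun k _ => hasSum_sum fun l _ => ?_
    have h := NormedSpace.expSeries_div_hasSum_exp (A k l)
    rw [← Real.exp_eq_exp_ℝ] at h
    simpa only [div_mul_eq_mul_div, mul_div_assoc] using (h.mul_right (c l)).mul_left (star c k)
  exact hseries.nonneg fun N =>
    div_nonneg ((hA.map_pow N).dotProduct_mulVec_nonneg c) (by positivity)

end Matrix

open MeasureTheory Set Real

open Matrix in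
theorem posSemidef_exp_neg_mul_norm_sub_sq {E : Type*} [NormedAddCommGroup E]
    [InnerProductSpace ℝ E] {ι : Type*} [Fintype ι] (z : ι → E) {s : ℝ} (hs : 0 ≤ s) :
    (of fun k l => Real.exp (-(s * ‖z k - z l‖ ^ 2))).PosSemidef := by
  set b : ι → ℝ := fun k => Real.exp (-(s * ‖z k‖ ^ 2))
  have h : of (fun k l => Real.exp (-(s * ‖z k - z l‖ ^ 2)))
      = vecMulVec b (star b) ⊙ ((2 * s) • gram ℝ z).map Real.exp := by
    ext k l
    simp only [of_apply, hadamard_apply, vecMulVec_apply, map_apply, Matrix.smul_apply, gram_apply,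
      smul_eq_mul, star_trivial, b, ← Real.exp_add, norm_sub_sq_real]
    ring_nf
  rw [h]
  exact (posSemidef_vecMulVec_self_star b).hadamard
    ((posSemidef_gram ℝ z).smul (by positivity)).map_exp

theorem one_sub_exp_neg_sq_nonneg (x : ℝ) : 0 ≤ 1 - exp (-x ^ 2) :=
  sub_nonneg.2 (exp_le_one_iff.2 (neg_nonpos.2 (sq_nonneg x)))

theorem integrableOn_one_sub_exp_neg_mul_sq_div_sq (r : ℝ) :
    IntegrableOn (fun t : ℝ => (1 - exp (-(t * r) ^ 2)) / t ^ 2) (Ioi 0) := by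
  have hmeas : AEStronglyMeasurable (fun t : ℝ => (1 - exp (-(t * r) ^ 2)) / t ^ 2) :=
    (by fun_prop : Measurable _).aestronglyMeasurable
  rw [← Ioc_union_Ioi_eq_Ioi zero_le_one]
  refine IntegrableOn.union (.of_bound measure_Ioc_lt_top hmeas.restrict (r ^ 2) ?_)
    (.mono' (integrableOn_Ioi_rpow_of_lt (by norm_num : (-2 : ℝ) < -1) one_pos)
      hmeas.restrict ?_)
  · filter_upwards [ae_restrict_mem measurableSet_Ioc] with t ht
    have ht : 0 < t := ht.1
    rw [norm_of_nonneg (div_nonneg (one_sub_exp_neg_sq_nonneg _) (sq_nonneg t)),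
      div_le_iff₀ (by positivity), ← mul_pow, mul_comm r]
    linarith [add_one_le_exp (-(t * r) ^ 2)]
  · filter_upwards [ae_restrict_mem measurableSet_Ioi] with t ht
    have ht : 0 < t := one_pos.trans ht
    rw [norm_of_nonneg (div_nonneg (one_sub_exp_neg_sq_nonneg _) (sq_nonneg t)),
      rpow_neg ht.le, rpow_two, ← one_div]
    exact div_le_div_of_nonneg_right (by linarith [exp_pos (-(t * r) ^ 2)]) (sq_nonneg t)

theorem integral_one_sub_exp_neg_mul_sq_div_sq {r : ℝ} (hr : 0 ≤ r) :
    ∫ t in Ioi 0, (1 - exp (-(t * r) ^ 2)) / t ^ 2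
      = r * ∫ t in Ioi 0, (1 - exp (-t ^ 2)) / t ^ 2 := by
  rcases hr.eq_or_lt with rfl | hr
  · simp
  have hscale : ∀ t : ℝ, (1 - exp (-(t * r) ^ 2)) / t ^ 2
      = r ^ 2 * ((1 - exp (-(t * r) ^ 2)) / (t * r) ^ 2) := by
    intro t
    rw [mul_pow, ← div_div, mul_div_cancel₀ _ (by positivity)]
  simp_rw [hscale]
  rw [integral_const_mul, integral_comp_mul_right_Ioi (fun t => (1 - exp (-t ^ 2)) / t ^ 2) 0 hr,
    zero_mul, smul_eq_mul, sq, mul_assoc, mul_inv_cancel_left₀ hr.ne']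

theorem integral_one_sub_exp_neg_sq_div_sq_pos :
    0 < ∫ t in Ioi 0, (1 - exp (-t ^ 2)) / t ^ 2 := by
  have hpos : ∀ t ∈ Ioi (0 : ℝ), 0 < (1 - exp (-t ^ 2)) / t ^ 2 := fun t (ht : 0 < t) =>
    div_pos (sub_pos.2 (exp_lt_one_iff.2 (by nlinarith))) (by positivity)
  rw [setIntegral_pos_iff_support_of_nonneg_ae
      (ae_restrict_of_forall_mem measurableSet_Ioi fun t ht => (hpos t ht).le)
      (by simpa using integrableOn_one_sub_exp_neg_mul_sq_div_sq 1),
    inter_eq_self_of_subset_right fun t ht => Function.mem_support.2 (hpos t ht).ne', volume_Ioi]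
  exact ENNReal.zero_lt_top

open Matrix in
theorem sum_mul_mul_one_sub_exp_nonpos_of_sum_eq_zero {E : Type*} [NormedAddCommGroup E]
    [InnerProductSpace ℝ E] {ι : Type*} [Fintype ι] {c : ι → ℝ} (hc : ∑ k, c k = 0)
    (z : ι → E) {s : ℝ} (hs : 0 ≤ s) :
    ∑ k, ∑ l, c k * c l * (1 - exp (-(s * ‖z k - z l‖ ^ 2))) ≤ 0 := by
  have h := (posSemidef_exp_neg_mul_norm_sub_sq z hs).dotProduct_mulVec_nonneg c
  simp only [dotProduct, mulVec, of_apply, star_trivial, Finset.mul_sum] at h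
  simp only [mul_sub, mul_one, Finset.sum_sub_distrib, ← Finset.sum_mul_sum, hc, zero_mul,
    zero_sub, neg_nonpos]
  exact h.trans_eq (Finset.sum_congr rfl fun k _ => Finset.sum_congr rfl fun l _ => by ring)

theorem sum_mul_mul_norm_sub_nonpos_of_sum_eq_zero {E : Type*} [NormedAddCommGroup E]
    [InnerProductSpace ℝ E] {ι : Type*} [Fintype ι] {c : ι → ℝ} (hc : ∑ k, c k = 0)
    (z : ι → E) :
    ∑ k, ∑ l, c k * c l * ‖z k - z l‖ ≤ 0 := by
  have hint : ∀ k l, IntegrableOn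
      (fun t => c k * c l * ((1 - exp (-(t * ‖z k - z l‖) ^ 2)) / t ^ 2)) (Ioi 0) :=
    fun k l => (integrableOn_one_sub_exp_neg_mul_sq_div_sq _).const_mul _
  have hrepr :
      (∑ k, ∑ l, c k * c l * ‖z k - z l‖) * ∫ t in Ioi 0, (1 - exp (-t ^ 2)) / t ^ 2
        = ∫ t in Ioi 0, ∑ k, ∑ l, c k * c l * ((1 - exp (-(t * ‖z k - z l‖) ^ 2)) / t ^ 2) := by
    rw [integral_finsetSum _ fun k _ => integrable_finsetSum _ fun l _ => hint k l]
    simp_rw [integral_finsetSum _ fun l _ => hint _ l, integral_const_mul,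
      integral_one_sub_exp_neg_mul_sq_div_sq (norm_nonneg _), Finset.sum_mul, mul_assoc]
  refine nonpos_of_mul_nonpos_left ?_ integral_one_sub_exp_neg_sq_div_sq_pos
  rw [hrepr]
  refine setIntegral_nonpos measurableSet_Ioi fun t _ => ?_
  simp only [mul_pow, ← mul_div_assoc, ← Finset.sum_div]
  exact div_nonpos_of_nonpos_of_nonneg
    (sum_mul_mul_one_sub_exp_nonpos_of_sum_eq_zero hc z (sq_nonneg t)) (sq_nonneg t)

theorem sum_sum_elim_mul_mul_norm_sub {E : Type*} [SeminormedAddCommGroup E] {α β : Type*}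
    [Fintype α] [Fintype β] (p q : ℝ) (x : α → E) (y : β → E) :
    ∑ k, ∑ l, Sum.elim (fun _ => p) (fun _ => -q) k * Sum.elim (fun _ => p) (fun _ => -q) l
        * ‖Sum.elim x y k - Sum.elim x y l‖
      = p ^ 2 * ∑ i, ∑ j, ‖x i - x j‖ + q ^ 2 * ∑ i, ∑ j, ‖y i - y j‖
        - 2 * p * q * ∑ i, ∑ j, ‖x i - y j‖ := by
  have hcross : ∑ j, ∑ i, ‖y j - x i‖ = ∑ i, ∑ j, ‖x i - y j‖ := by
    rw [Finset.sum_comm]; simp only [norm_sub_rev]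
  simp only [Fintype.sum_sum_type, Sum.elim_inl, Sum.elim_inr, Finset.sum_add_distrib,
    ← Finset.mul_sum, hcross]
  ring

theorem energy_vstat_nonneg
    {d : ℕ} (n m : ℕ) (hn : 0 < n) (hm : 0 < m)
    (x : Fin n → EuclideanSpace ℝ (Fin d)) (y : Fin m → EuclideanSpace ℝ (Fin d)) :
    0 ≤ (2 / ((m : ℝ) * n)) * ∑ i : Fin n, ∑ j : Fin m, ‖x i - y j‖
      - (1 / (n : ℝ) ^ 2) * ∑ i : Fin n, ∑ j : Fin n, ‖x i - x j‖
      - (1 / (m : ℝ) ^ 2) * ∑ i : Fin m, ∑ j : Fin m, ‖y i - y j‖ := by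
  have hweights :
      ∑ k, Sum.elim (fun _ : Fin n => (1 / n : ℝ)) (fun _ : Fin m => -(1 / m)) k = 0 := by
    simp [Fintype.sum_sum_type, hn.ne', hm.ne']
  have h := sum_mul_mul_norm_sub_nonpos_of_sum_eq_zero hweights (Sum.elim x y)
  rw [sum_sum_elim_mul_mul_norm_sub] at h
  rw [show 2 / ((m : ℝ) * n) = 2 * (1 / n) * (1 / m) by ring, ← one_div_pow, ← one_div_pow]
  linarith
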